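/- In the or-composition instance, where each book has all its available prices equal to T+1, each shop s of degree k has threshold k(T+1) and discount k, and the budget is T·n' with n' the total number of books: a purchase plan has cost at most T·n' if and only if the set of chosen shops S' is such that the books sold by shops of S' partition the book set B (each book is sold by exactly one shop of S', and every book at a shop in S' is bought there). -/

import Mathlib

/-!
Every purchase is made at a shop selling the book, so the number `cnt s` of books bought at `s`
is at most its degree `deg s`, with equality exactly when `s` reaches its discount, and
`∑ s, cnt s = |B|`. The cost is at most `T · |B|` iff the discounts collected add up to `|B|`;
since a shop reaching its discount contributes `deg s = cnt s`, this happens iff no book is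
bought at a shop missing its discount, i.e. iff every used shop sells only books bought there.
Then each book is sold by exactly one used shop, namely the one it is bought at.
-/

open Finset

theorem Finset.sum_le_sum_filter_le_iff {ι : Type*} (s : Finset ι) (c d : ι → ℕ)
    (hcd : ∀ i ∈ s, c i ≤ d i) :
    ∑ i ∈ s, c i ≤ ∑ i ∈ s with d i ≤ c i, d i ↔ ∀ i ∈ s, 0 < c i → d i ≤ c i := by
  have hsat : ∑ i ∈ s with d i ≤ c i, d i = ∑ i ∈ s with d i ≤ c i, c i :=
    sum_congr rfl fun i hi => by
      rw [mem_filter] at hi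
      exact le_antisymm hi.2 (hcd i hi.1)
  rw [hsat, ← sum_filter_add_sum_filter_not s (fun i => d i ≤ c i), add_le_iff_nonpos_right,
    Nat.le_zero, sum_eq_zero_iff]
  simp only [mem_filter, and_imp]
  exact forall₂_congr fun i hi => by omega

theorem existsUnique_used_avail {B S : Type*} (Avail : B → S → Bool) {g : B → S}
    (hg : ∀ b, Avail b (g b) = true)
    (h : ∀ s, (∃ b, g b = s) → ∀ b, Avail b s = true → g b = s) (b : B) :
    ∃! s, (∃ b', g b' = s) ∧ Avail b s = true :=
  ⟨g b, ⟨⟨b, rfl⟩, hg b⟩, fun _ ⟨hs, hb⟩ => (h _ hs b hb).symm⟩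

section PurchasePlan

variable {B S : Type*} [Fintype B] [DecidableEq S] (Avail : B → S → Bool) {g : B → S}

theorem fiber_subset_avail (hg : ∀ b, Avail b (g b) = true) (s : S) :
    (univ.filter fun b => g b = s) ⊆ univ.filter fun b => Avail b s = true := fun b hb => by
  simp only [mem_filter, mem_univ, true_and] at hb ⊢
  exact hb ▸ hg b

theorem card_avail_le_card_fiber_iff (hg : ∀ b, Avail b (g b) = true) (s : S) :
    #{b | Avail b s = true} ≤ #{b | g b = s} ↔ ∀ b, Avail b s = true → g b = s := by
  have hsub := fiber_subset_avail Avail hg s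
  have hsupset : (univ.filter fun b => Avail b s = true) ⊆ univ.filter (fun b => g b = s) ↔
      ∀ b, Avail b s = true → g b = s := by
    simp [subset_iff]
  rw [← hsupset]
  exact ⟨fun h => (eq_of_subset_of_card_le hsub h).ge, card_le_card⟩

end PurchasePlan

theorem stmt_15 {B S : Type*} [Fintype B] [Fintype S] [DecidableEq S]
    (Avail : B → S → Bool) (T : ℕ)
    (g : B → S) (hg : ∀ b, Avail b (g b) = true) :
    let deg : S → ℕ := fun s => (Finset.univ.filter (fun b => Avail b s = true)).card
    let cnt : S → ℕ := fun s => (Finset.univ.filter (fun b => g b = s)).card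
    let S' : Finset S := Finset.univ.filter (fun s => ∃ b, g b = s)
    ((((T : ℤ) + 1) * (Fintype.card B : ℤ) -
        ∑ s ∈ Finset.univ.filter (fun s => deg s * (T + 1) ≤ cnt s * (T + 1)), (deg s : ℤ))
      ≤ (T : ℤ) * (Fintype.card B : ℤ)) ↔
      ((∀ b, ∃! s, s ∈ S' ∧ Avail b s = true) ∧
        ∀ s ∈ S', ∀ b, Avail b s = true → g b = s) := by
  intro deg cnt S'
  have hdiscount : univ.filter (fun s => deg s * (T + 1) ≤ cnt s * (T + 1)) =
      univ.filter (fun s => deg s ≤ cnt s) :=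
    filter_congr fun s _ => Nat.mul_le_mul_right_iff T.succ_pos
  have hcost : (((T : ℤ) + 1) * Fintype.card B - ∑ s ∈ univ with deg s ≤ cnt s, (deg s : ℤ)
      ≤ T * Fintype.card B) ↔ ∑ s, cnt s ≤ ∑ s ∈ univ with deg s ≤ cnt s, deg s := by
    rw [← card_eq_sum_card_fiberwise fun b _ => mem_univ (g b), card_univ, ← Nat.cast_sum,
      ← Nat.cast_le (α := ℤ)]
    constructor <;> intro h <;> linarith
  rw [hdiscount, hcost, sum_le_sum_filter_le_iff _ _ _ fun s _ =>
    card_le_card (fiber_subset_avail Avail hg s)]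
  simp only [S', mem_filter, mem_univ, true_and, forall_const, card_pos, filter_nonempty_iff,
    card_avail_le_card_fiber_iff Avail hg]
  exact ⟨fun h => ⟨existsUnique_used_avail Avail hg h, h⟩, And.right⟩
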